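/- Let A = ℝ[h₁,…,hₙ] be a finitely generated algebra of measurable functions and Q ⊆ A a quadratic module. If 1 − (h₁² + ⋯ + hₙ²) ∈ Q, then the constant function 1 lies in the algebraic interior of Q. -/

import Mathlib

/-!
The elements `g` of `A` admitting a bound `N - g² ∈ Q` form a subalgebra: sums and products are
handled by `2(N - a²) + 2(M - b²) + (a - b)² = 2(N + M) - (a + b)²` and
`b²(N - a²) + N(M - b²) = NM - (ab)²`. Each generator `hᵢ` is bounded, since
`1 - hᵢ² = (1 - ∑ hⱼ²) + ∑_{j ≠ i} hⱼ²`, so every element of `ℝ[h₁,…,hₙ]` is bounded. For a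
bounded `g`, the identity `2(1 + t g) = (1 + t g)² + t²(N - g²) + (1 - t² N)` exhibits
`1 + t g` as an element of `Q` once `t² N ≤ 1`.
-/

section QuadraticModule

variable {R : Type*} [CommRing R] [Algebra ℝ R]

structure IsQuadraticModule (A : Subalgebra ℝ R) (Q : Set R) : Prop where
  one_mem : (1 : R) ∈ Q
  add_mem : ∀ p ∈ Q, ∀ q ∈ Q, p + q ∈ Q
  smul_mem : ∀ c : ℝ, 0 ≤ c → ∀ q ∈ Q, c • q ∈ Q
  sq_mul_mem : ∀ a ∈ A, ∀ q ∈ Q, a ^ 2 * q ∈ Q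

def IsAlgebraicInteriorPoint (A : Subalgebra ℝ R) (C : Set R) (ξ : R) : Prop :=
  ∀ g ∈ A, ∃ ε > (0 : ℝ), ∀ t : ℝ, 0 ≤ t → t < ε → ξ + t • g ∈ C

namespace IsQuadraticModule

variable {A : Subalgebra ℝ R} {Q : Set R} (hQ : IsQuadraticModule A Q)
include hQ

theorem algebraMap_mem {c : ℝ} (hc : 0 ≤ c) : algebraMap ℝ R c ∈ Q := by
  simpa [Algebra.algebraMap_eq_smul_one] using hQ.smul_mem c hc 1 hQ.one_mem

theorem zero_mem : (0 : R) ∈ Q := by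
  simpa using hQ.algebraMap_mem le_rfl

theorem sq_mem {a : R} (ha : a ∈ A) : a ^ 2 ∈ Q := by
  simpa using hQ.sq_mul_mem a ha 1 hQ.one_mem

theorem sum_mem {ι : Type*} {s : Finset ι} {f : ι → R} (hf : ∀ i ∈ s, f i ∈ Q) :
    ∑ i ∈ s, f i ∈ Q :=
  Finset.sum_induction f (· ∈ Q) (fun _ _ hp hq => hQ.add_mem _ hp _ hq) hQ.zero_mem hf

theorem algebraMap_smul_mem {c : ℝ} (hc : 0 ≤ c) {q : R} (hq : q ∈ Q) :
    algebraMap ℝ R c * q ∈ Q := by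
  simpa [Algebra.smul_def] using hQ.smul_mem c hc q hq

def boundedSubalgebra : Subalgebra ℝ R where
  carrier := {g | g ∈ A ∧ ∃ N : ℝ, 0 ≤ N ∧ algebraMap ℝ R N - g ^ 2 ∈ Q}
  algebraMap_mem' r := ⟨A.algebraMap_mem r, r ^ 2, sq_nonneg r, by simpa using hQ.zero_mem⟩
  one_mem' := ⟨A.one_mem, 1, zero_le_one, by simpa using hQ.zero_mem⟩
  zero_mem' := ⟨A.zero_mem, 0, le_rfl, by simpa using hQ.zero_mem⟩
  add_mem' := by
    rintro a b ⟨ha, N, hN, hNa⟩ ⟨hb, M, hM, hMb⟩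
    refine ⟨A.add_mem ha hb, 2 * (N + M), by positivity, ?_⟩
    have hsum := hQ.add_mem _ (hQ.add_mem _ (hQ.algebraMap_smul_mem zero_le_two hNa) _
      (hQ.algebraMap_smul_mem zero_le_two hMb)) _ (hQ.sq_mem (A.sub_mem ha hb))
    convert hsum using 1
    simp only [map_mul, map_add, map_ofNat]
    ring
  mul_mem' := by
    rintro a b ⟨ha, N, hN, hNa⟩ ⟨hb, M, hM, hMb⟩
    refine ⟨A.mul_mem ha hb, N * M, by positivity, ?_⟩
    have hsum := hQ.add_mem _ (hQ.sq_mul_mem b hb _ hNa) _ (hQ.algebraMap_smul_mem hN hMb)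
    convert hsum using 1
    simp only [map_mul]
    ring

theorem one_sub_sq_mem_of_one_sub_sum_sq_mem {ι : Type*} [Fintype ι] [DecidableEq ι]
    {h : ι → R} (hA : ∀ i, h i ∈ A) (hball : 1 - ∑ i, h i ^ 2 ∈ Q) (i : ι) :
    1 - h i ^ 2 ∈ Q := by
  have hrest := hQ.sum_mem (s := Finset.univ.erase i) fun j _ => hQ.sq_mem (hA j)
  convert hQ.add_mem _ hball _ hrest using 1
  rw [← Finset.add_sum_erase _ _ (Finset.mem_univ i)]
  ring

theorem adjoin_le_boundedSubalgebra {ι : Type*} [Fintype ι] {h : ι → R} (hA : ∀ i, h i ∈ A)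
    (hball : 1 - ∑ i, h i ^ 2 ∈ Q) :
    Algebra.adjoin ℝ (Set.range h) ≤ hQ.boundedSubalgebra := by
  classical
  refine Algebra.adjoin_le ?_
  rintro _ ⟨i, rfl⟩
  exact ⟨hA i, 1, zero_le_one, by
    simpa using hQ.one_sub_sq_mem_of_one_sub_sum_sq_mem hA hball i⟩

theorem one_add_smul_mem {g : R} (hg : g ∈ A) {N : ℝ} (hN : algebraMap ℝ R N - g ^ 2 ∈ Q)
    {t : ℝ} (ht : t ^ 2 * N ≤ 1) : 1 + t • g ∈ Q := by
  have hsq := hQ.algebraMap_smul_mem (inv_nonneg.2 zero_le_two)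
    (hQ.sq_mem (A.add_mem A.one_mem (A.smul_mem hg t)))
  have hrest := hQ.add_mem _ (hQ.algebraMap_smul_mem (by positivity : 0 ≤ t ^ 2 * 2⁻¹) hN) _
    (hQ.algebraMap_mem (by linarith : 0 ≤ (1 - t ^ 2 * N) * 2⁻¹))
  convert hQ.add_mem _ hsq _ hrest using 1
  have hhalf : algebraMap ℝ R 2⁻¹ * 2 = 1 := by
    rw [← map_ofNat (algebraMap ℝ R) 2, ← map_mul, inv_mul_cancel₀ two_ne_zero, map_one]
  simp only [Algebra.smul_def, map_mul, map_sub, map_pow, map_one]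
  linear_combination (-(1 + algebraMap ℝ R t * g)) * hhalf

theorem isAlgebraicInteriorPoint_one (hA : A ≤ hQ.boundedSubalgebra) :
    IsAlgebraicInteriorPoint A Q 1 := by
  intro g hg
  obtain ⟨-, N, hN, hNg⟩ := hA hg
  refine ⟨1 / (N + 1), by positivity, fun t ht htε => hQ.one_add_smul_mem hg hNg ?_⟩
  have htN : t * (N + 1) < 1 := (lt_div_iff₀ (by positivity)).mp htε
  nlinarith [mul_nonneg ht hN]

end IsQuadraticModule

end QuadraticModule

theorem one_mem_algebraic_interior_general
    {X : Type*} {n : ℕ}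
    (h : Fin n → (X → ℝ))
    (Q : Set (X → ℝ))
    (hQ1 : (1 : X → ℝ) ∈ Q)
    (hQadd : ∀ p ∈ Q, ∀ q ∈ Q, p + q ∈ Q)
    (hQsmul : ∀ c : ℝ, 0 ≤ c → ∀ q ∈ Q, c • q ∈ Q)
    (hQsq : ∀ a ∈ (Algebra.adjoin ℝ (Set.range h) : Subalgebra ℝ (X → ℝ)),
      ∀ q ∈ Q, a ^ 2 * q ∈ Q)
    (hball : (1 - ∑ i : Fin n, (h i) ^ 2) ∈ Q) :
    ∀ g ∈ (Algebra.adjoin ℝ (Set.range h) : Subalgebra ℝ (X → ℝ)),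
      ∃ ε > (0 : ℝ), ∀ t : ℝ, 0 ≤ t → t < ε → (1 : X → ℝ) + t • g ∈ Q := by
  have hQ : IsQuadraticModule (Algebra.adjoin ℝ (Set.range h)) Q := ⟨hQ1, hQadd, hQsmul, hQsq⟩
  exact hQ.isAlgebraicInteriorPoint_one <|
    hQ.adjoin_le_boundedSubalgebra (fun i => Algebra.subset_adjoin ⟨i, rfl⟩) hball

/-- If `1 - (h₁² + ⋯ + hₙ²)` belongs to a quadratic module `Q` of the finitely
generated algebra `ℝ[h₁,…,hₙ]` of measurable functions, then the constant
function `1` lies in the algebraic interior of `Q`. -/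
theorem one_mem_algebraic_interior
    {X : Type*} [MeasurableSpace X] {n : ℕ}
    (h : Fin n → (X → ℝ)) (hmeas : ∀ i, Measurable (h i))
    (Q : Set (X → ℝ))
    (hQA : Q ⊆ (Algebra.adjoin ℝ (Set.range h) : Subalgebra ℝ (X → ℝ)))
    (hQ1 : (1 : X → ℝ) ∈ Q)
    (hQadd : ∀ p ∈ Q, ∀ q ∈ Q, p + q ∈ Q)
    (hQsmul : ∀ c : ℝ, 0 ≤ c → ∀ q ∈ Q, c • q ∈ Q)
    (hQsq : ∀ a ∈ (Algebra.adjoin ℝ (Set.range h) : Subalgebra ℝ (X → ℝ)),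
      ∀ q ∈ Q, a ^ 2 * q ∈ Q)
    (hball : (1 - ∑ i : Fin n, (h i) ^ 2) ∈ Q) :
    ∀ g ∈ (Algebra.adjoin ℝ (Set.range h) : Subalgebra ℝ (X → ℝ)),
      ∃ ε > (0 : ℝ), ∀ t : ℝ, 0 ≤ t → t < ε → (1 : X → ℝ) + t • g ∈ Q :=
  one_mem_algebraic_interior_general h Q hQ1 hQadd hQsmul hQsq hball
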